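/- arXiv:math/0405207 — 2 statements merged into one kernel-verified Lean document; each statement's English description precedes it below -/
import Mathlib

section
/- With the impulsive Volterra setup and the operator S_d as defined there, let h* := min_{1≤i≤N+1}(τ_i − τ_{i−1}) and for μ > 0 define ‖ξ‖_μ := sup_{0≤t≤T} e^{−μt}|ξ(t)| and ‖η‖_μ := max_{1≤i≤N} e^{−μτ_i}|η_i|. Then for every μ > 0 and all admissible pairs (ξ₁,η₁), (ξ₂,η₂): ‖S_d(ξ₁,η₁) − S_d(ξ₂,η₂)‖_μ ≤ C_f·((1 − e^{−μτ_N})/μ)·‖ξ₁ − ξ₂‖_μ + C_G·e^{−μh*}·((1 − e^{−μ(N−1)h*})/(1 − e^{−μh*}))·‖η₁ − η₂‖_μ. -/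
open Set Filter MeasureTheory Real

/-!
Write `X = ‖ξ₁ - ξ₂‖_μ`, `Y = ‖η₁ - η₂‖_μ` and `r = e^{-μh*}`. In the `i`-th component the `h`
terms cancel. By the Lipschitz bound the integrand difference is at most `C_f X e^{μt}`, whose
integral over `[0, τ_i]` times `e^{-μτ_i}` is `C_f X (1 - e^{-μτ_i})/μ ≤ C_f X (1 - e^{-μτ_N})/μ`;
the integrals exist because `f` is bounded on compacts and `ξ`, `u` are piecewise continuous.
The `j`-th jump term is at most `C_G Y e^{μτ_j}`, and since consecutive impulse times are at least
`h*` apart, `e^{-μ(τ_i - τ_j)} ≤ r^{i-j}`; summing over `j < i ≤ N` gives at most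
`r + ⋯ + r^{N-1} = r (1 - r^{N-1})/(1 - r)`.
-/

section Partition

variable {τ : ℕ → ℝ}

theorem exists_mem_Ico_succ_of_mem_Ico {K : ℕ} {t : ℝ} (ht : t ∈ Ico (τ 0) (τ K)) :
    ∃ k < K, t ∈ Ico (τ k) (τ (k + 1)) := by
  induction K with
  | zero => exact absurd (ht.1.trans_lt ht.2) (lt_irrefl _)
  | succ K ih =>
    by_cases hK : t < τ K
    · obtain ⟨k, hk, hkt⟩ := ih ⟨ht.1, hK⟩
      exact ⟨k, by omega, hkt⟩
    · exact ⟨K, K.lt_succ_self, not_lt.1 hK, ht.2⟩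

theorem mem_of_eq_on_Ico {A : Type*} {U : Set A} {a : ℕ → A} {u : ℝ → A} {K : ℕ}
    (ha : ∀ i, 1 ≤ i → i ≤ K → a i ∈ U)
    (hu : ∀ i, 1 ≤ i → i ≤ K → ∀ t ∈ Ico (τ (i - 1)) (τ i), u t = a i)
    {t : ℝ} (ht : t ∈ Ico (τ 0) (τ K)) : u t ∈ U := by
  obtain ⟨k, hk, hkt⟩ := exists_mem_Ico_succ_of_mem_Ico ht
  rw [hu (k + 1) k.succ_pos hk t hkt]
  exact ha (k + 1) k.succ_pos hk

theorem natCast_sub_mul_le_sub {δ : ℝ} {i j : ℕ} (hji : j ≤ i)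
    (h : ∀ k, j ≤ k → k < i → δ ≤ τ (k + 1) - τ k) :
    ((i - j : ℕ) : ℝ) * δ ≤ τ i - τ j := by
  induction i, hji using Nat.le_induction with
  | base => simp
  | succ i hji ih =>
    have hi := h i hji i.lt_succ_self
    have := ih fun k hjk hki => h k hjk (hki.trans i.lt_succ_self)
    rw [Nat.succ_sub hji]
    push_cast
    linarith

end Partition

theorem nonneg_of_norm_sub_le_mul_norm_sub {E F : Type*} [NormedAddCommGroup E] [Nontrivial E]
    [SeminormedAddCommGroup F] {g : E → F} {C : ℝ}
    (h : ∀ x₁ x₂, ‖g x₁ - g x₂‖ ≤ C * ‖x₁ - x₂‖) : 0 ≤ C := by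
  obtain ⟨x, hx⟩ := exists_ne (0 : E)
  have hCx := (norm_nonneg _).trans (h x 0)
  rw [sub_zero] at hCx
  exact nonneg_of_mul_nonneg_left hCx (norm_pos_iff.2 hx)

theorem le_mul_exp_of_exp_neg_mul_mul_le {μ t x X : ℝ} (h : exp (-μ * t) * x ≤ X) :
    x ≤ X * exp (μ * t) := by
  have := mul_le_mul_of_nonneg_right h (exp_pos (μ * t)).le
  rwa [mul_right_comm, ← exp_add, neg_mul, neg_add_cancel, exp_zero, one_mul] at this

theorem norm_sub_le_iSup_mul_exp {E : Type*} [SeminormedAddCommGroup E] {T μ : ℝ} (hμ : 0 ≤ μ)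
    {ξ₁ ξ₂ : ℝ → E} (h₁ : ∃ M, ∀ t ∈ Icc 0 T, ‖ξ₁ t‖ ≤ M) (h₂ : ∃ M, ∀ t ∈ Icc 0 T, ‖ξ₂ t‖ ≤ M)
    {t : ℝ} (ht : t ∈ Icc 0 T) :
    ‖ξ₁ t - ξ₂ t‖ ≤ (⨆ s : Icc (0:ℝ) T, exp (-μ * s) * ‖ξ₁ s - ξ₂ s‖) * exp (μ * t) := by
  obtain ⟨M₁, hM₁⟩ := h₁
  obtain ⟨M₂, hM₂⟩ := h₂
  refine le_mul_exp_of_exp_neg_mul_mul_le (le_ciSup (f := fun s : Icc (0:ℝ) T =>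
    exp (-μ * s) * ‖ξ₁ s - ξ₂ s‖) ⟨M₁ + M₂, ?_⟩ ⟨t, ht⟩)
  rintro _ ⟨⟨s, hs⟩, rfl⟩
  have hexp : exp (-μ * s) ≤ 1 := exp_le_one_iff.2 (by nlinarith [hs.1])
  calc exp (-μ * s) * ‖ξ₁ s - ξ₂ s‖ ≤ 1 * (M₁ + M₂) := by
        gcongr
        exact (norm_sub_le _ _).trans (add_le_add (hM₁ s hs) (hM₂ s hs))
    _ = M₁ + M₂ := one_mul _

theorem integral_exp_mul_eq {μ : ℝ} (hμ : μ ≠ 0) (s : ℝ) :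
    ∫ t in (0:ℝ)..s, exp (μ * t) = (exp (μ * s) - 1) / μ := by
  rw [intervalIntegral.integral_comp_mul_left exp hμ, integral_exp, mul_zero, exp_zero,
    smul_eq_mul]
  field_simp

theorem exp_neg_mul_norm_integral_sub_le {F : Type*} [NormedAddCommGroup F] [NormedSpace ℝ F]
    {g₁ g₂ : ℝ → F} {μ K s S : ℝ} (hμ : 0 < μ) (hK : 0 ≤ K) (hs : 0 ≤ s) (hsS : s ≤ S)
    (hg₁ : IntervalIntegrable g₁ volume 0 s) (hg₂ : IntervalIntegrable g₂ volume 0 s)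
    (hb : ∀ t ∈ Icc 0 s, ‖g₁ t - g₂ t‖ ≤ K * exp (μ * t)) :
    exp (-μ * s) * ‖(∫ t in (0:ℝ)..s, g₁ t) - ∫ t in (0:ℝ)..s, g₂ t‖ ≤
      K * ((1 - exp (-μ * S)) / μ) := by
  have hint : ‖(∫ t in (0:ℝ)..s, g₁ t) - ∫ t in (0:ℝ)..s, g₂ t‖ ≤
      K * ((exp (μ * s) - 1) / μ) := by
    rw [← intervalIntegral.integral_sub hg₁ hg₂, ← integral_exp_mul_eq hμ.ne',
      ← intervalIntegral.integral_const_mul]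
    exact intervalIntegral.norm_integral_le_of_norm_le hs
      (ae_of_all _ fun t ht => hb t (Ioc_subset_Icc_self ht))
      (Continuous.intervalIntegrable (by fun_prop) _ _)
  calc exp (-μ * s) * ‖(∫ t in (0:ℝ)..s, g₁ t) - ∫ t in (0:ℝ)..s, g₂ t‖
      ≤ exp (-μ * s) * (K * ((exp (μ * s) - 1) / μ)) := by gcongr
    _ = K * ((1 - exp (-μ * s)) / μ) := by
      rw [neg_mul, exp_neg]
      field_simp
    _ ≤ K * ((1 - exp (-μ * S)) / μ) := by
      have : exp (-μ * S) ≤ exp (-μ * s) := exp_le_exp.2 (by nlinarith)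
      gcongr

theorem sum_Icc_pow_sub_le {r : ℝ} (hr : 0 ≤ r) {i N : ℕ} (hiN : i ≤ N) :
    ∑ j ∈ Finset.Icc 1 (i - 1), r ^ (i - j) ≤ ∑ k ∈ Finset.Icc 1 (N - 1), r ^ k := by
  calc ∑ j ∈ Finset.Icc 1 (i - 1), r ^ (i - j) = ∑ k ∈ Finset.Icc 1 (i - 1), r ^ k := by
        refine Finset.sum_nbij' (fun j => i - j) (fun k => i - k) ?_ ?_ ?_ ?_ fun _ _ => rfl <;>
          intro j hj <;> simp only [Finset.mem_Icc] at hj ⊢ <;> omega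
    _ ≤ ∑ k ∈ Finset.Icc 1 (N - 1), r ^ k :=
      Finset.sum_le_sum_of_subset_of_nonneg (Finset.Icc_subset_Icc_right (by omega))
        fun k _ _ => pow_nonneg hr k

theorem geom_sum_Icc_one {r : ℝ} (hr : r ≠ 1) (m : ℕ) :
    ∑ k ∈ Finset.Icc 1 m, r ^ k = r * ((1 - r ^ m) / (1 - r)) := by
  rw [← Finset.Ico_add_one_right_eq_Icc, geom_sum_Ico' hr (by omega), pow_one, pow_succ]
  ring

theorem exp_neg_mul_norm_sum_sub_le {E : Type*} [SeminormedAddCommGroup E] {μ δ K : ℝ}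
    (hμ : 0 ≤ μ) (hK : 0 ≤ K) {τ : ℕ → ℝ} {i N : ℕ} (hiN : i ≤ N)
    (hstep : ∀ k < i, δ ≤ τ (k + 1) - τ k) {g₁ g₂ : ℕ → E}
    (hg : ∀ j ∈ Finset.Icc 1 (i - 1), ‖g₁ j - g₂ j‖ ≤ K * exp (μ * τ j)) :
    exp (-μ * τ i) * ‖∑ j ∈ Finset.Icc 1 (i - 1), g₁ j - ∑ j ∈ Finset.Icc 1 (i - 1), g₂ j‖ ≤
      K * ∑ k ∈ Finset.Icc 1 (N - 1), exp (-μ * δ) ^ k := by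
  have hterm : ∀ j ∈ Finset.Icc 1 (i - 1),
      exp (-μ * τ i) * ‖g₁ j - g₂ j‖ ≤ K * exp (-μ * δ) ^ (i - j) := by
    intro j hj
    have hji : j ≤ i := by simp only [Finset.mem_Icc] at hj; omega
    have hgap := natCast_sub_mul_le_sub hji fun k _ hk => hstep k hk
    calc exp (-μ * τ i) * ‖g₁ j - g₂ j‖ ≤ exp (-μ * τ i) * (K * exp (μ * τ j)) := by
          gcongr
          exact hg j hj
      _ = K * exp (-μ * (τ i - τ j)) := by
          rw [mul_left_comm, ← exp_add]
          ring_nf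
      _ ≤ K * exp (-μ * δ) ^ (i - j) := by
          rw [← exp_nat_mul]
          exact mul_le_mul_of_nonneg_left
            (exp_le_exp.2 (by nlinarith [mul_le_mul_of_nonneg_left hgap hμ])) hK
  calc exp (-μ * τ i) * ‖∑ j ∈ Finset.Icc 1 (i - 1), g₁ j - ∑ j ∈ Finset.Icc 1 (i - 1), g₂ j‖
      ≤ ∑ j ∈ Finset.Icc 1 (i - 1), exp (-μ * τ i) * ‖g₁ j - g₂ j‖ := by
        rw [← Finset.sum_sub_distrib, ← Finset.mul_sum]
        gcongr
        exact norm_sum_le _ _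
    _ ≤ ∑ j ∈ Finset.Icc 1 (i - 1), K * exp (-μ * δ) ^ (i - j) := Finset.sum_le_sum hterm
    _ ≤ K * ∑ k ∈ Finset.Icc 1 (N - 1), exp (-μ * δ) ^ k := by
        rw [← Finset.mul_sum]
        gcongr
        exact sum_Icc_pow_sub_le (exp_pos _).le hiN

theorem intervalIntegrable_of_continuousOn_Ioo_of_norm_le {F : Type*} [NormedAddCommGroup F]
    {g : ℝ → F} {a b C : ℝ} (hab : a ≤ b) (hg : ContinuousOn g (Ioo a b))
    (hC : ∀ t ∈ Ioo a b, ‖g t‖ ≤ C) : IntervalIntegrable g volume a b := by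
  rw [intervalIntegrable_iff_integrableOn_Ioo_of_le hab]
  exact IntegrableOn.of_bound measure_Ioo_lt_top (hg.aestronglyMeasurable measurableSet_Ioo) C
    ((ae_restrict_iff' measurableSet_Ioo).2 (ae_of_all _ hC))

section Kernel

variable {E A F : Type*} [NormedAddCommGroup E] [ProperSpace E] [TopologicalSpace A]
  [NormedAddCommGroup F] {T : ℝ} {U : Set A} {f : ℝ → ℝ → E → A → F}

theorem exists_norm_kernel_le
    (hf : ContinuousOn (fun p : (ℝ × ℝ) × E × A => f p.1.1 p.1.2 p.2.1 p.2.2)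
      ({st : ℝ × ℝ | 0 ≤ st.2 ∧ st.2 ≤ st.1 ∧ st.1 ≤ T} ×ˢ (univ ×ˢ U)))
    {s : ℝ} (hsT : s ≤ T) {α : A} (hα : α ∈ U) (M : ℝ) :
    ∃ C, ∀ t ∈ Icc 0 s, ∀ x : E, ‖x‖ ≤ M → ‖f s t x α‖ ≤ C := by
  have hK : IsCompact ((({s} : Set ℝ) ×ˢ Icc 0 s) ×ˢ (Metric.closedBall (0 : E) M ×ˢ {α})) :=
    (isCompact_singleton.prod isCompact_Icc).prod
      ((isCompact_closedBall _ _).prod isCompact_singleton)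
  have hKD : (({s} : Set ℝ) ×ˢ Icc 0 s) ×ˢ (Metric.closedBall (0 : E) M ×ˢ {α}) ⊆
      {st : ℝ × ℝ | 0 ≤ st.2 ∧ st.2 ≤ st.1 ∧ st.1 ≤ T} ×ˢ (univ ×ˢ U) := by
    rintro ⟨⟨s', t⟩, x, β⟩ ⟨⟨rfl, ht⟩, -, rfl⟩
    exact ⟨⟨ht.1, ht.2, hsT⟩, trivial, hα⟩
  obtain ⟨C, hC⟩ := hK.exists_bound_of_continuousOn (hf.mono hKD)
  exact ⟨C, fun t ht x hx => hC ((s, t), (x, α)) ⟨⟨rfl, ht⟩, mem_closedBall_zero_iff.2 hx, rfl⟩⟩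

theorem intervalIntegrable_kernel_of_eq_on_Ioo
    (hf : ContinuousOn (fun p : (ℝ × ℝ) × E × A => f p.1.1 p.1.2 p.2.1 p.2.2)
      ({st : ℝ × ℝ | 0 ≤ st.2 ∧ st.2 ≤ st.1 ∧ st.1 ≤ T} ×ˢ (univ ×ˢ U)))
    {s : ℝ} (hsT : s ≤ T) {ξ : ℝ → E} {M : ℝ} (hξ : ∀ t ∈ Icc 0 s, ‖ξ t‖ ≤ M)
    {u : ℝ → A} {α : A} (hα : α ∈ U) {a b : ℝ} (ha : 0 ≤ a) (hab : a ≤ b) (hbs : b ≤ s)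
    (hξc : ContinuousOn ξ (Ioo a b)) (hu : ∀ t ∈ Ioo a b, u t = α) :
    IntervalIntegrable (fun t => f s t (ξ t) (u t)) volume a b := by
  have hsub : Ioo a b ⊆ Icc 0 s := fun t ht => ⟨ha.trans ht.1.le, ht.2.le.trans hbs⟩
  obtain ⟨C, hC⟩ := exists_norm_kernel_le hf hsT hα M
  refine intervalIntegrable_of_continuousOn_Ioo_of_norm_le (C := C) hab ?_ fun t ht => ?_
  · refine (hf.comp (f := fun t => ((s, t), (ξ t, α))) (by fun_prop)
      fun t ht => ?_).congr fun t ht => ?_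
    · exact ⟨⟨(hsub ht).1, (hsub ht).2, hsT⟩, trivial, hα⟩
    · simp only [Function.comp, hu t ht]
  · rw [hu t ht]
    exact hC t (hsub ht) (ξ t) (hξ t (hsub ht))

theorem intervalIntegrable_kernel_of_piecewise
    (hf : ContinuousOn (fun p : (ℝ × ℝ) × E × A => f p.1.1 p.1.2 p.2.1 p.2.2)
      ({st : ℝ × ℝ | 0 ≤ st.2 ∧ st.2 ≤ st.1 ∧ st.1 ≤ T} ×ˢ (univ ×ˢ U)))
    {τ : ℕ → ℝ} {K : ℕ} (hτ0 : τ 0 = 0) (hτ : MonotoneOn τ (Iic K)) (hτK : τ K ≤ T)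
    {a : ℕ → A} {u : ℝ → A} (ha : ∀ i, 1 ≤ i → i ≤ K → a i ∈ U)
    (hu : ∀ i, 1 ≤ i → i ≤ K → ∀ t ∈ Ico (τ (i - 1)) (τ i), u t = a i)
    {ξ : ℝ → E} (hξ : ∃ M, ∀ t ∈ Icc 0 T, ‖ξ t‖ ≤ M)
    (hξc : ∀ i, 1 ≤ i → i ≤ K → ContinuousOn ξ (Ioo (τ (i - 1)) (τ i))) {i : ℕ} (hiK : i ≤ K) :
    IntervalIntegrable (fun t => f (τ i) t (ξ t) (u t)) volume 0 (τ i) := by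
  obtain ⟨M, hM⟩ := hξ
  have hτ' : ∀ {j k}, j ≤ k → k ≤ K → τ j ≤ τ k := fun hjk hk =>
    hτ (mem_Iic.2 (hjk.trans hk)) (mem_Iic.2 hk) hjk
  have hτi : τ i ≤ T := (hτ' hiK le_rfl).trans hτK
  rw [← hτ0]
  refine IntervalIntegrable.trans_iterate fun k hk => ?_
  exact intervalIntegrable_kernel_of_eq_on_Ioo hf hτi (fun t ht => hM t ⟨ht.1, ht.2.trans hτi⟩)
    (ha (k + 1) k.succ_pos (by omega)) (hτ0 ▸ hτ' k.zero_le (by omega))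
    (hτ' k.le_succ (by omega)) (hτ' hk hiK) (hξc (k + 1) k.succ_pos (by omega))
    fun t ht => hu (k + 1) k.succ_pos (by omega) t (Ioo_subset_Ico_self ht)

theorem exp_neg_mul_norm_integral_kernel_sub_le [NormedSpace ℝ F]
    (hf : ContinuousOn (fun p : (ℝ × ℝ) × E × A => f p.1.1 p.1.2 p.2.1 p.2.2)
      ({st : ℝ × ℝ | 0 ≤ st.2 ∧ st.2 ≤ st.1 ∧ st.1 ≤ T} ×ˢ (univ ×ˢ U)))
    {Cf : ℝ} (hCf : 0 ≤ Cf)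
    (hfLip : ∀ s t : ℝ, 0 ≤ t → t ≤ s → s ≤ T → ∀ α ∈ U,
      ∀ x₁ x₂ : E, ‖f s t x₁ α - f s t x₂ α‖ ≤ Cf * ‖x₁ - x₂‖)
    {τ : ℕ → ℝ} {N : ℕ} (hτ0 : τ 0 = 0) (hτ : StrictMonoOn τ (Iic (N + 1)))
    (hτT : τ (N + 1) = T) {a : ℕ → A} {u : ℝ → A} (ha : ∀ i, 1 ≤ i → i ≤ N + 1 → a i ∈ U)
    (hu : ∀ i, 1 ≤ i → i ≤ N + 1 → ∀ t ∈ Ico (τ (i - 1)) (τ i), u t = a i)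
    {ξ₁ ξ₂ : ℝ → E} (hbdd₁ : ∃ M, ∀ t ∈ Icc 0 T, ‖ξ₁ t‖ ≤ M)
    (hbdd₂ : ∃ M, ∀ t ∈ Icc 0 T, ‖ξ₂ t‖ ≤ M)
    (hcont₁ : ∀ i, 1 ≤ i → i ≤ N + 1 → ContinuousOn ξ₁ (Ioo (τ (i - 1)) (τ i)))
    (hcont₂ : ∀ i, 1 ≤ i → i ≤ N + 1 → ContinuousOn ξ₂ (Ioo (τ (i - 1)) (τ i)))
    {μ : ℝ} (hμ : 0 < μ) {i : ℕ} (hiN : i ≤ N) :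
    exp (-μ * τ i) * ‖(∫ t in (0:ℝ)..τ i, f (τ i) t (ξ₁ t) (u t)) -
        ∫ t in (0:ℝ)..τ i, f (τ i) t (ξ₂ t) (u t)‖ ≤
      Cf * (⨆ t : Icc (0:ℝ) T, exp (-μ * t) * ‖ξ₁ t - ξ₂ t‖) * ((1 - exp (-μ * τ N)) / μ) := by
  have hτNT : τ N < T := hτT ▸ hτ (mem_Iic.2 N.le_succ) (mem_Iic.2 le_rfl) N.lt_succ_self
  have hτi : 0 ≤ τ i :=
    hτ0 ▸ hτ.monotoneOn (mem_Iic.2 (Nat.zero_le _)) (mem_Iic.2 (by omega)) i.zero_le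
  have hτiN : τ i ≤ τ N := hτ.monotoneOn (mem_Iic.2 (by omega)) (mem_Iic.2 N.le_succ) hiN
  refine exp_neg_mul_norm_integral_sub_le hμ
    (mul_nonneg hCf (Real.iSup_nonneg fun t => by positivity)) hτi hτiN
    (intervalIntegrable_kernel_of_piecewise hf hτ0 hτ.monotoneOn hτT.le ha hu hbdd₁ hcont₁
      (by omega))
    (intervalIntegrable_kernel_of_piecewise hf hτ0 hτ.monotoneOn hτT.le ha hu hbdd₂ hcont₂
      (by omega)) fun t ht => ?_
  have htT : t < T := ht.2.trans_lt (hτiN.trans_lt hτNT)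
  refine (hfLip _ t ht.1 ht.2 (hτiN.trans hτNT.le) _
    (mem_of_eq_on_Ico ha hu ⟨hτ0 ▸ ht.1, hτT ▸ htT⟩) _ _).trans ?_
  rw [mul_assoc]
  exact mul_le_mul_of_nonneg_left (norm_sub_le_iSup_mul_exp hμ.le hbdd₁ hbdd₂ ⟨ht.1, htT.le⟩) hCf

end Kernel

theorem exp_neg_mul_norm_sum_kernel_sub_le {E A F : Type*} [NormedAddCommGroup E]
    [SeminormedAddCommGroup F] {T : ℝ} {U : Set A} {G : ℝ → ℝ → E → A → A → F} {CG : ℝ}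
    (hCG : 0 ≤ CG)
    (hGLip : ∀ s t : ℝ, 0 ≤ t → t ≤ s → s ≤ T → ∀ α ∈ U, ∀ β ∈ U,
      ∀ x₁ x₂ : E, ‖G s t x₁ α β - G s t x₂ α β‖ ≤ CG * ‖x₁ - x₂‖)
    {τ : ℕ → ℝ} {N : ℕ} (hN : 1 ≤ N) (hτ0 : τ 0 = 0) (hτ : MonotoneOn τ (Iic (N + 1)))
    (hτT : τ (N + 1) = T) {δ : ℝ} (hδ : ∀ k < N, δ ≤ τ (k + 1) - τ k) {a : ℕ → A}
    (ha : ∀ i, 1 ≤ i → i ≤ N + 1 → a i ∈ U) {η₁ η₂ : ℕ → E} {μ : ℝ} (hμ : 0 ≤ μ)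
    {i : ℕ} (hiN : i ≤ N) :
    exp (-μ * τ i) * ‖∑ j ∈ Finset.Icc 1 (i - 1), G (τ i) (τ j) (η₁ j) (a j) (a (j + 1)) -
        ∑ j ∈ Finset.Icc 1 (i - 1), G (τ i) (τ j) (η₂ j) (a j) (a (j + 1))‖ ≤
      CG * (Finset.Icc 1 N).sup' (Finset.nonempty_Icc.mpr hN)
          (fun j => exp (-μ * τ j) * ‖η₁ j - η₂ j‖) *
        ∑ k ∈ Finset.Icc 1 (N - 1), exp (-μ * δ) ^ k := by
  set Y := (Finset.Icc 1 N).sup' (Finset.nonempty_Icc.mpr hN)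
    (fun j => exp (-μ * τ j) * ‖η₁ j - η₂ j‖)
  have hτ' : ∀ {j k}, j ≤ k → k ≤ N + 1 → τ j ≤ τ k := fun hjk hk =>
    hτ (mem_Iic.2 (hjk.trans hk)) (mem_Iic.2 hk) hjk
  have hY : 0 ≤ Y := (by positivity : (0:ℝ) ≤ _).trans
    (Finset.le_sup' (fun j => exp (-μ * τ j) * ‖η₁ j - η₂ j‖) (Finset.mem_Icc.2 ⟨le_rfl, hN⟩))
  refine exp_neg_mul_norm_sum_sub_le hμ (mul_nonneg hCG hY) hiN
    (fun k hk => hδ k (by omega)) fun j hj => ?_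
  rw [Finset.mem_Icc] at hj
  refine (hGLip _ _ (hτ0 ▸ hτ' j.zero_le (by omega)) (hτ' (by omega) (by omega))
    (hτT ▸ hτ' (by omega) le_rfl) _ (ha j hj.1 (by omega)) _ (ha (j + 1) (by omega) (by omega))
    _ _).trans ?_
  rw [mul_assoc]
  exact mul_le_mul_of_nonneg_left (le_mul_exp_of_exp_neg_mul_mul_le
    (Finset.le_sup' (fun j => exp (-μ * τ j) * ‖η₁ j - η₂ j‖)
      (Finset.mem_Icc.2 ⟨hj.1, by omega⟩))) hCG

/-- **Lemma 3.2, discrete component.** With `h* = min (τ_i − τ_{i−1})` and the weighted norms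
`‖ξ‖_μ = sup_{0≤t≤T} e^{−μt}|ξ(t)|`, `‖η‖_μ = max_{1≤i≤N} e^{−μτ_i}|η_i|`, the discrete
component `S_d` of the fixed-point operator satisfies, for every `μ > 0`,
`‖S_d(ξ₁,η₁) − S_d(ξ₂,η₂)‖_μ ≤ C_f (1−e^{−μτ_N})/μ ‖ξ₁−ξ₂‖_μ
  + C_G e^{−μh*}(1−e^{−μ(N−1)h*})/(1−e^{−μh*}) ‖η₁−η₂‖_μ`. -/
theorem Sd_weighted_norm_estimate
    (n m N : ℕ) (hN : 1 ≤ N) (T : ℝ) (hT : 0 < T)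
    (τ : ℕ → ℝ) (hτ0 : τ 0 = 0) (hτT : τ (N + 1) = T)
    (hτmono : ∀ i j : ℕ, i < j → j ≤ N + 1 → τ i < τ j)
    (U : Set (Fin m → ℝ)) (a : ℕ → (Fin m → ℝ)) (haU : ∀ i, 1 ≤ i → i ≤ N + 1 → a i ∈ U)
    (u : ℝ → (Fin m → ℝ))
    (hu : ∀ i, 1 ≤ i → i ≤ N + 1 → ∀ t ∈ Ico (τ (i - 1)) (τ i), u t = a i)
    (h : ℝ → EuclideanSpace ℝ (Fin n))
    (f : ℝ → ℝ → EuclideanSpace ℝ (Fin n) → (Fin m → ℝ) → EuclideanSpace ℝ (Fin n))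
    (G : ℝ → ℝ → EuclideanSpace ℝ (Fin n) → (Fin m → ℝ) → (Fin m → ℝ) →
      EuclideanSpace ℝ (Fin n))
    (hf : ContinuousOn
      (fun p : (ℝ × ℝ) × EuclideanSpace ℝ (Fin n) × (Fin m → ℝ) => f p.1.1 p.1.2 p.2.1 p.2.2)
      (({st : ℝ × ℝ | 0 ≤ st.2 ∧ st.2 ≤ st.1 ∧ st.1 ≤ T}) ×ˢ ((univ : Set _) ×ˢ U)))
    (Cf CG : ℝ)
    (hfLip : ∀ s t : ℝ, 0 ≤ t → t ≤ s → s ≤ T → ∀ α ∈ U,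
      ∀ x₁ x₂ : EuclideanSpace ℝ (Fin n), ‖f s t x₁ α - f s t x₂ α‖ ≤ Cf * ‖x₁ - x₂‖)
    (hGLip : ∀ s t : ℝ, 0 ≤ t → t ≤ s → s ≤ T → ∀ α ∈ U, ∀ β ∈ U,
      ∀ x₁ x₂ : EuclideanSpace ℝ (Fin n), ‖G s t x₁ α β - G s t x₂ α β‖ ≤ CG * ‖x₁ - x₂‖)
    (μ : ℝ) (hμ : 0 < μ)
    -- the two admissible pairs `(ξ₁,η₁)`, `(ξ₂,η₂)`:
    (ξ₁ ξ₂ : ℝ → EuclideanSpace ℝ (Fin n)) (η₁ η₂ : ℕ → EuclideanSpace ℝ (Fin n))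
    (hbdd₁ : ∃ M : ℝ, ∀ t ∈ Icc 0 T, ‖ξ₁ t‖ ≤ M)
    (hbdd₂ : ∃ M : ℝ, ∀ t ∈ Icc 0 T, ‖ξ₂ t‖ ≤ M)
    (hcont₁ : ∀ i, 1 ≤ i → i ≤ N + 1 → ContinuousOn ξ₁ (Ioo (τ (i - 1)) (τ i)))
    (hcont₂ : ∀ i, 1 ≤ i → i ≤ N + 1 → ContinuousOn ξ₂ (Ioo (τ (i - 1)) (τ i))) :
    -- the discrete-component estimate with the explicit constants `a₂₁(μ)`, `a₂₂(μ)` of (3.5)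
    ((Finset.Icc 1 N).sup' (Finset.nonempty_Icc.mpr hN) (fun i => Real.exp (-μ * τ i) *
        ‖(h (τ i) + (∫ t in (0:ℝ)..(τ i), f (τ i) t (ξ₁ t) (u t)) +
            ∑ j ∈ Finset.Icc 1 (i - 1),
              G (τ i) (τ j) (η₁ j) (a j) (a (j + 1))) -
          (h (τ i) + (∫ t in (0:ℝ)..(τ i), f (τ i) t (ξ₂ t) (u t)) +
            ∑ j ∈ Finset.Icc 1 (i - 1),
              G (τ i) (τ j) (η₂ j) (a j) (a (j + 1)))‖))
    ≤ Cf * ((1 - Real.exp (-μ * τ N)) / μ) *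
        (⨆ t : Icc (0:ℝ) T, Real.exp (-μ * t) * ‖ξ₁ t - ξ₂ t‖) +
      CG * (Real.exp (-μ * ((Finset.Icc 1 (N + 1)).inf'
            (Finset.nonempty_Icc.mpr (by omega)) (fun i => τ i - τ (i - 1)))) *
          ((1 - Real.exp (-μ * ((N : ℝ) - 1) * ((Finset.Icc 1 (N + 1)).inf'
            (Finset.nonempty_Icc.mpr (by omega)) (fun i => τ i - τ (i - 1))))) /
          (1 - Real.exp (-μ * ((Finset.Icc 1 (N + 1)).inf'
            (Finset.nonempty_Icc.mpr (by omega)) (fun i => τ i - τ (i - 1))))))) *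
        ((Finset.Icc 1 N).sup' (Finset.nonempty_Icc.mpr hN)
          (fun i => Real.exp (-μ * τ i) * ‖η₁ i - η₂ i‖)) := by
  set δ := (Finset.Icc 1 (N + 1)).inf' _ fun i => τ i - τ (i - 1)
  -- on the zero space the Lipschitz constants may be negative, but then both sides vanish
  rcases subsingleton_or_nontrivial (EuclideanSpace ℝ (Fin n)) with hE | hE
  · simp [Subsingleton.elim _ (0 : EuclideanSpace ℝ (Fin n))]
  have ha1 : a 1 ∈ U := haU 1 le_rfl (by omega)
  have hCf : 0 ≤ Cf := nonneg_of_norm_sub_le_mul_norm_sub (hfLip 0 0 le_rfl le_rfl hT.le _ ha1)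
  have hCG : 0 ≤ CG :=
    nonneg_of_norm_sub_le_mul_norm_sub (hGLip 0 0 le_rfl le_rfl hT.le _ ha1 _ ha1)
  have hτ : StrictMonoOn τ (Iic (N + 1)) := fun i _ j hj hij => hτmono i j hij hj
  have hδ : 0 < δ := (Finset.lt_inf'_iff _).2 fun i hi => by
    rw [Finset.mem_Icc] at hi
    exact sub_pos.2 (hτmono _ _ (by omega) hi.2)
  have hstep : ∀ k < N, δ ≤ τ (k + 1) - τ k := fun k hk =>
    Finset.inf'_le _ (Finset.mem_Icc.2 ⟨k.succ_pos, by omega⟩)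
  refine Finset.sup'_le _ _ fun i hi => ?_
  have hiN : i ≤ N := (Finset.mem_Icc.1 hi).2
  rw [add_sub_add_comm, add_sub_add_left_eq_sub]
  refine (mul_le_mul_of_nonneg_left (norm_add_le _ _) (exp_pos _).le).trans ?_
  rw [mul_add]
  refine (add_le_add
    (exp_neg_mul_norm_integral_kernel_sub_le hf hCf hfLip hτ0 hτ hτT haU hu hbdd₁ hbdd₂
      hcont₁ hcont₂ hμ hiN)
    (exp_neg_mul_norm_sum_kernel_sub_le hCG hGLip hN hτ0 hτ.monotoneOn hτT hstep haU hμ.le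
      hiN)).trans_eq ?_
  rw [geom_sum_Icc_one (exp_lt_one_iff.2 (by nlinarith)).ne, ← exp_nat_mul, Nat.cast_sub hN]
  push_cast
  ring_nf
end

section
/- Let T > 0 and let K : ℝ → ℝ → Matrix (Fin n) (Fin n) ℝ be measurable with ‖K(s,t)‖ ≤ M for 0 ≤ t ≤ s ≤ T, with resolvent kernel R(s,t) := ∑_{m=1}^∞ K^{*m}(s,t) (so that for every continuous h, x(s) = h(s) + ∫₀^s R(s,t)h(t)dt solves x(s) = h(s) + ∫₀^s K(s,t)x(t)dt). Then for every bounded measurable η : [0,T] → ℝⁿ, the function y(t) := η(t) + ∫_t^T η(s)ᵀ·R(s,t) ds (row-vector–matrix products, i.e. y(t)ᵀ = η(t)ᵀ + ∫_t^T η(s)ᵀ R(s,t) ds) satisfies the dual (backward) Volterra equation y(t)ᵀ = η(t)ᵀ + ∫_t^T y(s)ᵀ·K(s,t) ds for all t ∈ [0,T]. -/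
/-!
On the triangle `a ≤ t ≤ s ≤ b` a kernel bounded by `M` satisfies
`‖K^{*(m+1)}(s,t)‖ ≤ M (M (s-t))^m / m!`, so the resolvent series converges there, and
associativity of the convolution gives `K^{*m} * K = K^{*(m+1)}`. Summing under the integral
(dominated convergence) yields the resolvent identity `∫_t^r R(r,s) K(s,t) ds = R(r,t) - K(r,t)`.

For the duality, `∫_t^T y(s)ᵀ K(s,t) ds` splits into `∫_t^T η(s)ᵀ K(s,t) ds` plus a double integral
over `t ≤ s ≤ r ≤ T`; exchanging the order of integration (Fubini on the triangle) turns the inner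
integral into `η(r)ᵀ ∫_t^r R(r,s) K(s,t) ds = η(r)ᵀ (R(r,t) - K(r,t))`, and the two `K` terms
cancel. This is done for an abstract right action `B` of a Banach algebra on a Banach space, here
`v ↦ v ᵥ* A`.
-/

open scoped Matrix
open Set

attribute [local instance] Matrix.linftyOpNormedAddCommGroup Matrix.linftyOpNormedSpace

noncomputable def kernelConv {n : ℕ} (K₁ K₂ : ℝ → ℝ → Matrix (Fin n) (Fin n) ℝ) :
    ℝ → ℝ → Matrix (Fin n) (Fin n) ℝ :=
  fun s t => ∫ r in t..s, K₁ s r * K₂ r t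

/-- `iterKernel K m = K^{*(m+1)}`: the index is shifted by one. -/
noncomputable def iterKernel {n : ℕ} (K : ℝ → ℝ → Matrix (Fin n) (Fin n) ℝ) :
    ℕ → ℝ → ℝ → Matrix (Fin n) (Fin n) ℝ
  | 0 => K
  | m + 1 => kernelConv K (iterKernel K m)

noncomputable def resolventKernel {n : ℕ} (K : ℝ → ℝ → Matrix (Fin n) (Fin n) ℝ)
    (s t : ℝ) : Matrix (Fin n) (Fin n) ℝ :=
  ∑' m : ℕ, iterKernel K m s t

open MeasureTheory Function Filter

section MeasureTheory

variable {E : Type*} [NormedAddCommGroup E]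

theorem intervalIntegrable_of_norm_le {f : ℝ → E} {a b C : ℝ} (hab : a ≤ b)
    (hf : AEStronglyMeasurable f) (hC : ∀ x ∈ Ioc a b, ‖f x‖ ≤ C) :
    IntervalIntegrable f volume a b :=
  (intervalIntegrable_iff_integrableOn_Ioc_of_le hab).2 <|
    Measure.integrableOn_of_bounded measure_Ioc_lt_top.ne hf
      ((ae_restrict_iff' measurableSet_Ioc).2 (Eventually.of_forall hC))

theorem stronglyMeasurable_tsum {α E : Type*} [MeasurableSpace α] [NormedAddCommGroup E]
    {f : ℕ → α → E} (hf : ∀ m, StronglyMeasurable (f m)) (hs : ∀ x, Summable fun m => f m x) :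
    StronglyMeasurable fun x => ∑' m, f m x :=
  stronglyMeasurable_of_tendsto atTop (fun N => Finset.stronglyMeasurable_sum (Finset.range N)
    fun m _ => hf m) (tendsto_pi_nhds.2 fun x => by
      simpa only [Finset.sum_apply] using (hs x).hasSum.tendsto_sum_nat)

variable [NormedSpace ℝ E]

theorem stronglyMeasurable_intervalIntegral {α : Type*} [MeasurableSpace α]
    {f : α → ℝ → E} (hf : StronglyMeasurable (uncurry f)) {u v : α → ℝ}
    (hu : Measurable u) (hv : Measurable v) :
    StronglyMeasurable fun x => ∫ r in u x..v x, f x r := by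
  have hIoc : ∀ {u v : α → ℝ}, Measurable u → Measurable v →
      StronglyMeasurable fun x => ∫ r in Ioc (u x) (v x), f x r := by
    intro u v hu hv
    have hS : MeasurableSet {q : α × ℝ | u q.1 < q.2 ∧ q.2 ≤ v q.1} :=
      (measurableSet_lt (hu.comp measurable_fst) measurable_snd).inter
        (measurableSet_le measurable_snd (hv.comp measurable_fst))
    convert (hf.indicator hS).integral_prod_right' (ν := volume) using 2 with x
    rw [← integral_indicator measurableSet_Ioc]
    rfl
  exact (hIoc hu hv).sub (hIoc hv hu)

theorem intervalIntegrable_bilin_of_norm_le {F G : Type*} [NormedAddCommGroup F]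
    [NormedSpace ℝ F] [NormedAddCommGroup G] [NormedSpace ℝ G] (B : E →L[ℝ] F →L[ℝ] G)
    {f : ℝ → E} {g : ℝ → F} {a b C D : ℝ} (hab : a ≤ b) (hf : StronglyMeasurable f)
    (hg : StronglyMeasurable g) (hfC : ∀ x ∈ Ioc a b, ‖f x‖ ≤ C)
    (hgD : ∀ x ∈ Ioc a b, ‖g x‖ ≤ D) :
    IntervalIntegrable (fun x => B (f x) (g x)) volume a b :=
  intervalIntegrable_of_norm_le hab
    (B.continuous₂.comp_stronglyMeasurable (hf.prodMk hg)).aestronglyMeasurable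
    fun x hx => (B.le_opNorm₂ _ _).trans <| by
      have hC : 0 ≤ C := (norm_nonneg _).trans (hfC x hx)
      grw [hfC x hx, hgD x hx]

theorem integral_integral_swap_triangle {f : ℝ → ℝ → E} {a b C : ℝ}
    (hab : a ≤ b) (hf : StronglyMeasurable (uncurry f))
    (hC : ∀ x y, a ≤ x → x < y → y ≤ b → ‖f x y‖ ≤ C) :
    ∫ x in a..b, ∫ y in x..b, f x y = ∫ y in a..b, ∫ x in a..y, f x y := by
  set S : Set (ℝ × ℝ) := {p | p.1 < p.2}
  have hS : MeasurableSet S := measurableSet_lt measurable_fst measurable_snd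
  set G : ℝ → ℝ → E := fun x y => S.indicator (uncurry f) (x, y)
  have hx : ∀ x ∈ uIcc a b, ∫ y in x..b, f x y = ∫ y in a..b, G x y := by
    intro x hx
    rw [uIcc_of_le hab] at hx
    have hGx : G x = (Ioi x).indicator (f x) := rfl
    rw [hGx, intervalIntegral.integral_of_le hab, setIntegral_indicator measurableSet_Ioi,
      Ioc_inter_Ioi, sup_eq_right.2 hx.1, intervalIntegral.integral_of_le hx.2]
  have hy : ∀ y ∈ uIcc a b, ∫ x in a..y, f x y = ∫ x in a..b, G x y := by
    intro y hy
    rw [uIcc_of_le hab] at hy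
    have hGy : (fun x => G x y) = (Iio y).indicator (fun x => f x y) := rfl
    have hI : Ioc a b ∩ Iio y = Ioo a y := by
      ext x; simp only [mem_inter_iff, mem_Ioc, mem_Iio, mem_Ioo]; grind
    rw [hGy, intervalIntegral.integral_of_le hab, setIntegral_indicator measurableSet_Iio, hI,
      ← integral_Ioc_eq_integral_Ioo, intervalIntegral.integral_of_le hy.1]
  rw [intervalIntegral.integral_congr hx, intervalIntegral.integral_congr hy]
  refine intervalIntegral_intervalIntegral_swap ?_
  have hsq : uIoc a b ×ˢ uIoc a b ⊆ uIcc a b ×ˢ uIcc a b :=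
    prod_mono uIoc_subset_uIcc uIoc_subset_uIcc
  refine Measure.integrableOn_of_bounded (M := max C 0)
    ((measure_mono hsq).trans_lt (isCompact_uIcc.prod isCompact_uIcc).measure_lt_top).ne
    (hf.indicator hS).aestronglyMeasurable
    ((ae_restrict_iff' (measurableSet_uIoc.prod measurableSet_uIoc)).2 (Eventually.of_forall ?_))
  rintro ⟨x, y⟩ ⟨hx, hy⟩
  rw [uIoc_of_le hab] at hx hy
  show ‖S.indicator (uncurry f) (x, y)‖ ≤ max C 0
  by_cases hxy : x < y
  · rw [indicator_of_mem (show (x, y) ∈ S from hxy)]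
    exact (hC x y hx.1.le hxy hy.2).trans (le_max_left C 0)
  · rw [indicator_of_notMem (show (x, y) ∉ S from hxy), norm_zero]
    exact le_max_right C 0

end MeasureTheory


section NormedAlgebra

variable {A : Type*} [NormedRing A] [NormedAlgebra ℝ A]

theorem intervalIntegrable_mul_of_norm_le {L₁ L₂ : ℝ → ℝ → A} {a b C : ℝ}
    (h₁ : StronglyMeasurable (uncurry L₁)) (h₂ : StronglyMeasurable (uncurry L₂))
    (hC₁ : ∀ s t, a ≤ t → t ≤ s → s ≤ b → ‖L₁ s t‖ ≤ C)
    (hC₂ : ∀ s t, a ≤ t → t ≤ s → s ≤ b → ‖L₂ s t‖ ≤ C) {s t : ℝ}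
    (ht : a ≤ t) (hts : t ≤ s) (hs : s ≤ b) :
    IntervalIntegrable (fun r => L₁ s r * L₂ r t) volume t s :=
  intervalIntegrable_bilin_of_norm_le (ContinuousLinearMap.mul ℝ A) hts
    (h₁.comp_measurable (measurable_const.prodMk measurable_id))
    (h₂.comp_measurable (measurable_id.prodMk measurable_const))
    (fun r hr => hC₁ s r (ht.trans hr.1.le) hr.2 hs)
    (fun r hr => hC₂ r t ht hr.1.le (hr.2.trans hs))

variable [CompleteSpace A]

theorem intervalIntegral.integral_mul_const_of_integrable {f : ℝ → A} {a b : ℝ}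
    (hf : IntervalIntegrable f volume a b) (c : A) :
    ∫ x in a..b, f x * c = (∫ x in a..b, f x) * c :=
  ((ContinuousLinearMap.mul ℝ A).flip c).intervalIntegral_comp_comm hf

theorem intervalIntegral.integral_const_mul_of_integrable {f : ℝ → A} {a b : ℝ}
    (hf : IntervalIntegrable f volume a b) (c : A) :
    ∫ x in a..b, c * f x = c * ∫ x in a..b, f x :=
  (ContinuousLinearMap.mul ℝ A c).intervalIntegral_comp_comm hf

variable {V : Type*} [NormedAddCommGroup V] [NormedSpace ℝ V] [CompleteSpace V]
  (B : V →L[ℝ] A →L[ℝ] V) {K R : ℝ → ℝ → A} {η : ℝ → V} {a b C : ℝ} (hab : a ≤ b)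
  (hK : StronglyMeasurable (uncurry K)) (hR : StronglyMeasurable (uncurry R))
  (hη : StronglyMeasurable η) (hKC : ∀ s t, a ≤ t → t ≤ s → s ≤ b → ‖K s t‖ ≤ C)
  (hRC : ∀ s t, a ≤ t → t ≤ s → s ≤ b → ‖R s t‖ ≤ C) (hηC : ∀ s ∈ Icc a b, ‖η s‖ ≤ C)
include hab hK hR hη hKC hRC hηC

theorem integral_apply_integral_swap (hB : ∀ v x y, B (B v x) y = B v (x * y)) :
    ∫ s in a..b, B (∫ r in s..b, B (η r) (R r s)) (K s a) =
      ∫ r in a..b, B (η r) (∫ s in a..r, R r s * K s a) := by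
  have hC : 0 ≤ C := (norm_nonneg _).trans (hηC a ⟨le_rfl, hab⟩)
  calc ∫ s in a..b, B (∫ r in s..b, B (η r) (R r s)) (K s a)
      = ∫ s in a..b, ∫ r in s..b, B (η r) (R r s * K s a) := by
        refine intervalIntegral.integral_congr fun s hs => ?_
        rw [uIcc_of_le hab] at hs
        simp_rw [← hB]
        refine ((B.flip (K s a)).intervalIntegral_comp_comm ?_).symm
        exact intervalIntegrable_bilin_of_norm_le B hs.2 hη
          (hR.comp_measurable (measurable_id.prodMk measurable_const))
          (fun r hr => hηC r ⟨hs.1.trans hr.1.le, hr.2⟩) (fun r hr => hRC r s hs.1 hr.1.le hr.2)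
    _ = ∫ r in a..b, ∫ s in a..r, B (η r) (R r s * K s a) := by
        refine integral_integral_swap_triangle hab (C := ‖B‖ * C * (C * C))
          (B.continuous₂.comp_stronglyMeasurable ((hη.comp_measurable measurable_snd).prodMk
            ((hR.comp_measurable measurable_swap).mul
              (hK.comp_measurable (measurable_fst.prodMk measurable_const)))))
          fun s r has hsr hrb => (B.le_opNorm₂ _ _).trans ?_
        grw [norm_mul_le, hηC r ⟨has.trans hsr.le, hrb⟩, hRC r s has hsr.le hrb,
          hKC s a le_rfl has (hsr.le.trans hrb)]
    _ = ∫ r in a..b, B (η r) (∫ s in a..r, R r s * K s a) := by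
        refine intervalIntegral.integral_congr fun r hr => ?_
        rw [uIcc_of_le hab] at hr
        exact (B (η r)).intervalIntegral_comp_comm
          (intervalIntegrable_mul_of_norm_le hR hK hRC hKC le_rfl hr.1 hr.2)

theorem dual_volterra_of_resolvent_identity (hB : ∀ v x y, B (B v x) y = B v (x * y))
    (hres : ∀ r ∈ Icc a b, ∫ s in a..r, R r s * K s a = R r a - K r a) :
    ∫ s in a..b, B (η s) (R s a) =
      ∫ s in a..b, B (η s + ∫ r in s..b, B (η r) (R r s)) (K s a) := by
  have hC : 0 ≤ C := (norm_nonneg _).trans (hηC a ⟨le_rfl, hab⟩)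
  have hKa : StronglyMeasurable fun s => K s a :=
    hK.comp_measurable (measurable_id.prodMk measurable_const)
  have hKaC : ∀ s ∈ Ioc a b, ‖K s a‖ ≤ C := fun s hs => hKC s a le_rfl hs.1.le hs.2
  have hηC' : ∀ s ∈ Ioc a b, ‖η s‖ ≤ C := fun s hs => hηC s (Ioc_subset_Icc_self hs)
  have hg : StronglyMeasurable fun s => ∫ r in s..b, B (η r) (R r s) :=
    stronglyMeasurable_intervalIntegral (B.continuous₂.comp_stronglyMeasurable
      ((hη.comp_measurable measurable_snd).prodMk (hR.comp_measurable measurable_swap)))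
      measurable_id measurable_const
  have hgC : ∀ s ∈ Ioc a b, ‖∫ r in s..b, B (η r) (R r s)‖ ≤ ‖B‖ * C * C * (b - a) := by
    intro s hs
    refine (intervalIntegral.norm_integral_le_of_norm_le_const (C := ‖B‖ * C * C)
      fun r hr => ?_).trans ?_
    · rw [uIoc_of_le hs.2] at hr
      refine (B.le_opNorm₂ _ _).trans ?_
      grw [hηC r ⟨hs.1.le.trans hr.1.le, hr.2⟩, hRC r s hs.1.le hr.1.le hr.2]
    · rw [abs_of_nonneg (sub_nonneg.2 hs.2)]
      gcongr
      exact hs.1.le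
  have hηR : IntervalIntegrable (fun s => B (η s) (R s a)) volume a b :=
    intervalIntegrable_bilin_of_norm_le B hab hη
      (hR.comp_measurable (measurable_id.prodMk measurable_const)) hηC'
      fun s hs => hRC s a le_rfl hs.1.le hs.2
  have hηK := intervalIntegrable_bilin_of_norm_le B hab hη hKa hηC' hKaC
  have hgK := intervalIntegrable_bilin_of_norm_le B hab hg hKa hgC hKaC
  have hres' : ∀ r ∈ uIcc a b, B (η r) (∫ s in a..r, R r s * K s a) =
      B (η r) (R r a) - B (η r) (K r a) := fun r hr => by
    rw [hres r (uIcc_of_le hab ▸ hr), map_sub]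
  simp_rw [B.map_add₂]
  rw [intervalIntegral.integral_add hηK hgK,
    integral_apply_integral_swap B hab hK hR hη hKC hRC hηC hB,
    intervalIntegral.integral_congr hres', intervalIntegral.integral_sub hηR hηK]
  abel

end NormedAlgebra

section MatrixKernel

attribute [local instance] Matrix.linftyOpNormedRing Matrix.linftyOpNormedAlgebra

variable {n : ℕ}

theorem stronglyMeasurable_matrix_of_entries {α : Type*} [MeasurableSpace α]
    {f : α → Matrix (Fin n) (Fin n) ℝ} (hf : ∀ i j, Measurable fun x => f x i j) :
    StronglyMeasurable f :=
  (Matrix.ofLinearEquiv ℝ : (Fin n → Fin n → ℝ) ≃ₗ[ℝ] _).toContinuousLinearEquiv.continuous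
    |>.comp_stronglyMeasurable
      (measurable_pi_lambda _ fun i => measurable_pi_lambda _ fun j => hf i j).stronglyMeasurable

theorem stronglyMeasurable_kernelConv {K₁ K₂ : ℝ → ℝ → Matrix (Fin n) (Fin n) ℝ}
    (h₁ : StronglyMeasurable (uncurry K₁)) (h₂ : StronglyMeasurable (uncurry K₂)) :
    StronglyMeasurable (uncurry (kernelConv K₁ K₂)) :=
  stronglyMeasurable_intervalIntegral
    ((h₁.comp_measurable (measurable_fst.fst.prodMk measurable_snd)).mul
      (h₂.comp_measurable (measurable_snd.prodMk measurable_fst.snd)))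
    measurable_snd measurable_fst

theorem stronglyMeasurable_iterKernel {K : ℝ → ℝ → Matrix (Fin n) (Fin n) ℝ}
    (hK : StronglyMeasurable (uncurry K)) (m : ℕ) :
    StronglyMeasurable (uncurry (iterKernel K m)) := by
  induction m with
  | zero => exact hK
  | succ m ih => exact stronglyMeasurable_kernelConv hK ih

theorem kernelConv_assoc {a b C : ℝ} {K₁ K₂ K₃ : ℝ → ℝ → Matrix (Fin n) (Fin n) ℝ}
    (h₁ : StronglyMeasurable (uncurry K₁)) (h₂ : StronglyMeasurable (uncurry K₂))
    (h₃ : StronglyMeasurable (uncurry K₃))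
    (hC₁ : ∀ s t, a ≤ t → t ≤ s → s ≤ b → ‖K₁ s t‖ ≤ C)
    (hC₂ : ∀ s t, a ≤ t → t ≤ s → s ≤ b → ‖K₂ s t‖ ≤ C)
    (hC₃ : ∀ s t, a ≤ t → t ≤ s → s ≤ b → ‖K₃ s t‖ ≤ C) {s t : ℝ}
    (ht : a ≤ t) (hts : t ≤ s) (hs : s ≤ b) :
    kernelConv (kernelConv K₁ K₂) K₃ s t = kernelConv K₁ (kernelConv K₂ K₃) s t := by
  have hC : 0 ≤ C := (norm_nonneg _).trans (hC₁ s s (ht.trans hts) le_rfl hs)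
  calc kernelConv (kernelConv K₁ K₂) K₃ s t
      = ∫ u in t..s, (∫ r in u..s, K₁ s r * K₂ r u) * K₃ u t := rfl
    _ = ∫ u in t..s, ∫ r in u..s, K₁ s r * K₂ r u * K₃ u t := by
        refine intervalIntegral.integral_congr fun u hu => ?_
        rw [uIcc_of_le hts] at hu
        exact (intervalIntegral.integral_mul_const_of_integrable
          (intervalIntegrable_mul_of_norm_le h₁ h₂ hC₁ hC₂ (ht.trans hu.1) hu.2 hs) _).symm
    _ = ∫ r in t..s, ∫ u in t..r, K₁ s r * K₂ r u * K₃ u t := by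
        refine integral_integral_swap_triangle hts (C := C * C * C)
          (((h₁.comp_measurable (measurable_const.prodMk measurable_snd)).mul
            (h₂.comp_measurable measurable_swap)).mul
            (h₃.comp_measurable (measurable_fst.prodMk measurable_const)))
          fun u r htu hur hrs => norm_mul₃_le.trans ?_
        grw [hC₁ s r ((ht.trans htu).trans hur.le) hrs hs,
          hC₂ r u (ht.trans htu) hur.le (hrs.trans hs),
          hC₃ u t ht htu ((hur.le.trans hrs).trans hs)]
    _ = ∫ r in t..s, K₁ s r * ∫ u in t..r, K₂ r u * K₃ u t := by
        refine intervalIntegral.integral_congr fun r hr => ?_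
        rw [uIcc_of_le hts] at hr
        simp_rw [mul_assoc]
        exact intervalIntegral.integral_const_mul_of_integrable
          (intervalIntegrable_mul_of_norm_le h₂ h₃ hC₂ hC₃ ht hr.1 (hr.2.trans hs)) _

variable {K : ℝ → ℝ → Matrix (Fin n) (Fin n) ℝ} {a b M : ℝ}
  (hK : ∀ s t, a ≤ t → t ≤ s → s ≤ b → ‖K s t‖ ≤ M)
include hK

theorem norm_iterKernel_le_pow (m : ℕ) {s t : ℝ} (ht : a ≤ t) (hts : t ≤ s) (hs : s ≤ b) :
    ‖iterKernel K m s t‖ ≤ M * ((M * (s - t)) ^ m / m.factorial) := by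
  have hM : 0 ≤ M := (norm_nonneg _).trans (hK t t ht le_rfl (hts.trans hs))
  induction m generalizing s with
  | zero => simpa [iterKernel] using hK s t ht hts hs
  | succ m ih =>
    calc ‖iterKernel K (m + 1) s t‖ = ‖∫ r in t..s, K s r * iterKernel K m r t‖ := rfl
    _ ≤ ∫ r in t..s, M ^ (m + 2) / m.factorial * (r - t) ^ m := by
        refine intervalIntegral.norm_integral_le_of_norm_le hts (Eventually.of_forall
          fun r hr => ?_) ((by fun_prop : Continuous _).intervalIntegrable _ _)
        calc ‖K s r * iterKernel K m r t‖ ≤ ‖K s r‖ * ‖iterKernel K m r t‖ := norm_mul_le _ _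
        _ ≤ M * (M * ((M * (r - t)) ^ m / m.factorial)) := by
            gcongr
            exacts [hK s r (ht.trans hr.1.le) hr.2 hs, ih hr.1.le (hr.2.trans hs)]
        _ = M ^ (m + 2) / m.factorial * (r - t) ^ m := by rw [mul_pow]; ring
    _ = M * ((M * (s - t)) ^ (m + 1) / (m + 1).factorial) := by
        rw [intervalIntegral.integral_const_mul, intervalIntegral.integral_comp_sub_right
          (· ^ m), integral_pow, sub_self, zero_pow m.succ_ne_zero, sub_zero,
          Nat.factorial_succ, mul_pow]
        push_cast
        field_simp
        ring

theorem norm_iterKernel_le (m : ℕ) {s t : ℝ} (ht : a ≤ t) (hts : t ≤ s) (hs : s ≤ b) :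
    ‖iterKernel K m s t‖ ≤ M * ((M * (b - a)) ^ m / m.factorial) := by
  have hM : 0 ≤ M := (norm_nonneg _).trans (hK t t ht le_rfl (hts.trans hs))
  refine (norm_iterKernel_le_pow hK m ht hts hs).trans ?_
  gcongr

theorem summable_iterKernel {s t : ℝ} (ht : a ≤ t) (hts : t ≤ s) (hs : s ≤ b) :
    Summable fun m => iterKernel K m s t :=
  .of_norm_bounded ((Real.summable_pow_div_factorial _).mul_left M)
    fun m => norm_iterKernel_le hK m ht hts hs

theorem norm_iterKernel_le_exp (m : ℕ) (s t : ℝ) (ht : a ≤ t) (hts : t ≤ s) (hs : s ≤ b) :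
    ‖iterKernel K m s t‖ ≤ M * Real.exp (M * (b - a)) := by
  have hM : 0 ≤ M := (norm_nonneg _).trans (hK t t ht le_rfl (hts.trans hs))
  refine (norm_iterKernel_le hK m ht hts hs).trans ?_
  gcongr
  exact Real.pow_div_factorial_le_exp _ (mul_nonneg hM (by linarith)) m

theorem norm_resolventKernel_le {s t : ℝ} (ht : a ≤ t) (hts : t ≤ s) (hs : s ≤ b) :
    ‖resolventKernel K s t‖ ≤ M * Real.exp (M * (b - a)) := by
  have hexp : HasSum (fun m => (M * (b - a)) ^ m / m.factorial) (Real.exp (M * (b - a))) := by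
    rw [Real.exp_eq_exp_ℝ]
    exact NormedSpace.expSeries_div_hasSum_exp _
  exact tsum_of_norm_bounded (hexp.mul_left M) fun m => norm_iterKernel_le hK m ht hts hs

variable (hKm : StronglyMeasurable (uncurry K))
include hKm

theorem kernelConv_iterKernel (m : ℕ) {s t : ℝ} (ht : a ≤ t) (hts : t ≤ s) (hs : s ≤ b) :
    kernelConv (iterKernel K m) K s t = iterKernel K (m + 1) s t := by
  induction m generalizing s with
  | zero => rfl
  | succ m ih =>
    have hC := norm_iterKernel_le_exp hK
    calc kernelConv (kernelConv K (iterKernel K m)) K s t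
        = kernelConv K (kernelConv (iterKernel K m) K) s t :=
          kernelConv_assoc hKm (stronglyMeasurable_iterKernel hKm m) hKm (hC 0) (hC m) (hC 0)
            ht hts hs
      _ = kernelConv K (iterKernel K (m + 1)) s t := by
          refine intervalIntegral.integral_congr fun r hr => ?_
          rw [uIcc_of_le hts] at hr
          simp only [ih hr.1 (hr.2.trans hs)]

theorem integral_resolventKernel_mul {r t : ℝ} (ht : a ≤ t) (htr : t ≤ r) (hr : r ≤ b) :
    ∫ s in t..r, resolventKernel K r s * K s t = resolventKernel K r t - K r t := by
  have hsum := intervalIntegral.hasSum_integral_of_dominated_convergence (μ := volume)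
    (F := fun m s => iterKernel K m r s * K s t)
    (fun m _ => M * ((M * (b - a)) ^ m / m.factorial) * M)
    (fun m => ((stronglyMeasurable_iterKernel hKm m).comp_measurable
      (measurable_const.prodMk measurable_id)).mul
      (hKm.comp_measurable (measurable_id.prodMk measurable_const)) |>.aestronglyMeasurable)
    (fun m => Eventually.of_forall fun s hs => by
      rw [uIoc_of_le htr] at hs
      have hiter := norm_iterKernel_le hK m (ht.trans hs.1.le) hs.2 hr
      exact (norm_mul_le _ _).trans (mul_le_mul hiter (hK s t ht hs.1.le (hs.2.trans hr))
        (norm_nonneg _) ((norm_nonneg _).trans hiter)))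
    (Eventually.of_forall fun _ _ =>
      ((Real.summable_pow_div_factorial _).mul_left M).mul_right M)
    intervalIntegrable_const
    (Eventually.of_forall fun s hs => by
      rw [uIoc_of_le htr] at hs
      exact (summable_iterKernel hK (ht.trans hs.1.le) hs.2 hr).hasSum.mul_right (K s t))
  have hshift : HasSum (fun m => iterKernel K (m + 1) r t) (resolventKernel K r t - K r t) := by
    have h := (hasSum_nat_add_iff' 1).2 (summable_iterKernel hK ht htr hr).hasSum
    rwa [Finset.range_one, Finset.sum_singleton] at h
  exact hsum.unique (hshift.congr_fun fun m => kernelConv_iterKernel hK hKm m ht htr hr)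

/- Off the triangle the series defining `resolventKernel K` may diverge, and its junk value there
need not be measurable. -/
theorem exists_stronglyMeasurable_eq_resolventKernel :
    ∃ R : ℝ → ℝ → Matrix (Fin n) (Fin n) ℝ, StronglyMeasurable (uncurry R) ∧
      ∀ s t, a ≤ t → t ≤ s → s ≤ b → R s t = resolventKernel K s t := by
  set S : Set (ℝ × ℝ) := {p | a ≤ p.2 ∧ p.2 ≤ p.1 ∧ p.1 ≤ b}
  have hS : MeasurableSet S := (measurableSet_le measurable_const measurable_snd).inter
    ((measurableSet_le measurable_snd measurable_fst).inter
      (measurableSet_le measurable_fst measurable_const))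
  refine ⟨fun s t => ∑' m, S.indicator (uncurry (iterKernel K m)) (s, t),
    stronglyMeasurable_tsum (fun m => (stronglyMeasurable_iterKernel hKm m).indicator hS)
      fun p => ?_, fun s t ht hts hs => ?_⟩
  · by_cases hp : p ∈ S
    · simp only [indicator_of_mem hp]
      exact summable_iterKernel hK hp.1 hp.2.1 hp.2.2
    · simpa only [indicator_of_notMem hp] using summable_zero
  · simp only [indicator_of_mem (show (s, t) ∈ S from ⟨ht, hts, hs⟩)]
    rfl

theorem resolventKernel_dual {η : ℝ → Fin n → ℝ} {C : ℝ} (hη : StronglyMeasurable η)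
    (hηC : ∀ s ∈ Icc a b, ‖η s‖ ≤ C) {t : ℝ} (ht : t ∈ Icc a b) :
    ∫ s in t..b, η s ᵥ* resolventKernel K s t =
      ∫ s in t..b, (η s + ∫ r in s..b, η r ᵥ* resolventKernel K r s) ᵥ* K s t := by
  let B : (Fin n → ℝ) →L[ℝ] Matrix (Fin n) (Fin n) ℝ →L[ℝ] Fin n → ℝ :=
    LinearMap.toContinuousLinearMap
      (LinearMap.toContinuousLinearMap.toLinearMap ∘ₗ Matrix.vecMulBilin ℝ ℝ)
  obtain ⟨R, hRm, hR⟩ := exists_stronglyMeasurable_eq_resolventKernel hK hKm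
  have hC := norm_iterKernel_le_exp hK 0
  have hdual := dual_volterra_of_resolvent_identity B (R := R)
    (C := max C (M * Real.exp (M * (b - a)))) ht.2 hKm hRm hη
    (fun s r htr hrs hsb => (hC s r (ht.1.trans htr) hrs hsb).trans (le_max_right _ _))
    (fun s r htr hrs hsb => by
      rw [hR s r (ht.1.trans htr) hrs hsb]
      exact (norm_resolventKernel_le hK (ht.1.trans htr) hrs hsb).trans (le_max_right _ _))
    (fun s hs => (hηC s ⟨ht.1.trans hs.1, hs.2⟩).trans (le_max_left _ _))
    (fun v x y => Matrix.vecMul_vecMul v x y)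
    (fun r hr => by
      rw [hR r t ht.1 hr.1 hr.2, ← integral_resolventKernel_mul hK hKm ht.1 hr.1 hr.2]
      refine intervalIntegral.integral_congr fun s hs => ?_
      rw [uIcc_of_le hr.1] at hs
      simp only [hR r s (ht.1.trans hs.1) hs.2 hr.2])
  have hRs : ∀ s ∈ uIcc t b, ∀ r ∈ uIcc s b, η r ᵥ* resolventKernel K r s = B (η r) (R r s) := by
    intro s hs r hr
    rw [uIcc_of_le ht.2] at hs
    rw [uIcc_of_le hs.2] at hr
    rw [hR r s (ht.1.trans hs.1) hr.1 hr.2]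
    rfl
  have hinner : ∀ s ∈ uIcc t b, (η s + ∫ r in s..b, η r ᵥ* resolventKernel K r s) ᵥ* K s t =
      B (η s + ∫ r in s..b, B (η r) (R r s)) (K s t) := fun s hs => by
    rw [intervalIntegral.integral_congr (hRs s hs)]
    rfl
  rw [intervalIntegral.integral_congr fun s hs => hRs t left_mem_uIcc s hs,
    intervalIntegral.integral_congr hinner]
  exact hdual

end MatrixKernel

theorem resolvent_duality_general
    (n : ℕ) (T : ℝ)
    (K : ℝ → ℝ → Matrix (Fin n) (Fin n) ℝ)
    (hmeas : ∀ i j : Fin n, Measurable (fun p : ℝ × ℝ => K p.1 p.2 i j))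
    (M : ℝ) (hbound : ∀ s t : ℝ, 0 ≤ t → t ≤ s → s ≤ T → ‖K s t‖ ≤ M)
    (η : ℝ → (Fin n → ℝ)) (hηmeas : Measurable η)
    (hηbdd : ∃ C : ℝ, ∀ t ∈ Icc 0 T, ‖η t‖ ≤ C) :
    ∀ t ∈ Icc 0 T,
      (η t + ∫ s in t..T, Matrix.vecMul (η s) (resolventKernel K s t)) =
        η t + ∫ s in t..T,
          Matrix.vecMul
            (η s + ∫ r in s..T, Matrix.vecMul (η r) (resolventKernel K r s))
            (K s t) := by
  intro t ht
  obtain ⟨C, hC⟩ := hηbdd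
  rw [resolventKernel_dual hbound (stronglyMeasurable_matrix_of_entries hmeas)
    hηmeas.stronglyMeasurable hC ht]

/-- **Duality of the resolvent (equation (4.23)).** If `R` is the resolvent kernel of `K`, then
for every bounded measurable `η`, the function `y(t)ᵀ = η(t)ᵀ + ∫_t^T η(s)ᵀ R(s,t) ds`
(row-vector–matrix products) satisfies the dual backward Volterra equation
`y(t)ᵀ = η(t)ᵀ + ∫_t^T y(s)ᵀ K(s,t) ds` for all `t ∈ [0,T]`. -/
theorem resolvent_duality
    (n : ℕ) (T : ℝ) (hT : 0 < T)
    (K : ℝ → ℝ → Matrix (Fin n) (Fin n) ℝ)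
    (hmeas : ∀ i j : Fin n, Measurable (fun p : ℝ × ℝ => K p.1 p.2 i j))
    (M : ℝ) (hbound : ∀ s t : ℝ, 0 ≤ t → t ≤ s → s ≤ T → ‖K s t‖ ≤ M)
    (η : ℝ → (Fin n → ℝ)) (hηmeas : Measurable η)
    (hηbdd : ∃ C : ℝ, ∀ t ∈ Icc 0 T, ‖η t‖ ≤ C) :
    ∀ t ∈ Icc 0 T,
      (η t + ∫ s in t..T, Matrix.vecMul (η s) (resolventKernel K s t)) =
        η t + ∫ s in t..T,
          Matrix.vecMul
            (η s + ∫ r in s..T, Matrix.vecMul (η r) (resolventKernel K r s))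
            (K s t) :=
  resolvent_duality_general n T K hmeas M hbound η hηmeas hηbdd
end
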